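/- Let V₁, V₂ be subspaces of a finite-dimensional complex inner product space E with W := V₂ ∩ V₁⊥ = {0} (the non-intersection condition). Then for every z ∈ ℂ the kernel of T_{V₂}(z) ∘ T_{V₁}(z) is {0} if z ≠ 0, and equals V₁ if z = 0. -/

import Mathlib

/-!
For `z ≠ 0`, `T_V(z) = 1 + (z - 1) Π_V` with `Π_V` idempotent, so `z ↦ T_V(z)` is multiplicative
and `T_V(z)` is invertible with inverse `T_V(z⁻¹)`. At `z = 0`, `T_V(0) = Π_{V⊥}`, and `x` is
killed by `Π_{V₂⊥} Π_{V₁⊥}` iff `Π_{V₁⊥} x ∈ V₂ ∩ V₁⊥ = {0}`, i.e. iff `x ∈ V₁`.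
-/

noncomputable def projL {E : Type*} [NormedAddCommGroup E] [InnerProductSpace ℂ E]
    [FiniteDimensional ℂ E] (V : Submodule ℂ E) : E →ₗ[ℂ] E :=
  V.subtype ∘ₗ (V.orthogonalProjection).toLinearMap

noncomputable def TV {E : Type*} [NormedAddCommGroup E] [InnerProductSpace ℂ E]
    [FiniteDimensional ℂ E] (V : Submodule ℂ E) (z : ℂ) : E →ₗ[ℂ] E :=
  z • projL V + projL Vᗮ

theorem LinearMap.ker_comp_of_ker_inf_range_eq_bot {R M M₂ M₃ : Type*} [Semiring R]
    [AddCommMonoid M] [AddCommMonoid M₂] [AddCommMonoid M₃] [Module R M] [Module R M₂]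
    [Module R M₃] {f : M →ₗ[R] M₂} {g : M₂ →ₗ[R] M₃} (h : ker g ⊓ range f = ⊥) :
    ker (g ∘ₗ f) = ker f := by
  refine le_antisymm (fun x hx => ?_) (ker_le_ker_comp f g)
  have hfx : f x ∈ ker g ⊓ range f := ⟨hx, mem_range_self f x⟩
  rwa [h, Submodule.mem_bot] at hfx

variable {E : Type*} [NormedAddCommGroup E] [InnerProductSpace ℂ E] [FiniteDimensional ℂ E]

theorem projL_eq_starProjection (V : Submodule ℂ E) : projL V = V.starProjection := rfl

@[simp]
theorem ker_projL (V : Submodule ℂ E) : LinearMap.ker (projL V) = Vᗮ := by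
  rw [projL_eq_starProjection]
  exact V.ker_starProjection

@[simp]
theorem range_projL (V : Submodule ℂ E) : LinearMap.range (projL V) = V := by
  rw [projL_eq_starProjection]
  exact V.range_starProjection

theorem TV_zero (V : Submodule ℂ E) : TV V 0 = projL Vᗮ := by
  simp [TV]

theorem projL_mul_self (V : Submodule ℂ E) : projL V * projL V = projL V := by
  rw [projL_eq_starProjection, ← ContinuousLinearMap.toLinearMap_mul,
    V.isIdempotentElem_starProjection.eq]

theorem projL_orthogonal (V : Submodule ℂ E) : projL Vᗮ = 1 - projL V := by
  rw [projL_eq_starProjection, projL_eq_starProjection, V.starProjection_orthogonal']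
  rfl

theorem TV_eq_one_add (V : Submodule ℂ E) (z : ℂ) : TV V z = 1 + (z - 1) • projL V := by
  rw [TV, projL_orthogonal]
  module

theorem TV_comp_TV (V : Submodule ℂ E) (z w : ℂ) : TV V z ∘ₗ TV V w = TV V (z * w) := by
  rw [← Module.End.mul_eq_comp, TV_eq_one_add, TV_eq_one_add, TV_eq_one_add]
  simp only [mul_add, add_mul, one_mul, mul_one, smul_mul_smul_comm, projL_mul_self]
  module

theorem TV_one (V : Submodule ℂ E) : TV V 1 = LinearMap.id := by
  rw [TV_eq_one_add, sub_self, zero_smul, add_zero]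
  rfl

theorem ker_TV_eq_bot (V : Submodule ℂ E) {z : ℂ} (hz : z ≠ 0) : LinearMap.ker (TV V z) = ⊥ :=
  LinearMap.ker_eq_bot_of_inverse (g := TV V z⁻¹) (by rw [TV_comp_TV, inv_mul_cancel₀ hz, TV_one])

theorem ker_TV_comp (V₁ V₂ : Submodule ℂ E) (h : V₂ ⊓ V₁ᗮ = ⊥) (z : ℂ) :
    (z ≠ 0 → LinearMap.ker (TV V₂ z ∘ₗ TV V₁ z) = ⊥) ∧
    LinearMap.ker (TV V₂ 0 ∘ₗ TV V₁ 0) = V₁ := by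
  refine ⟨fun hz => ?_, ?_⟩
  · rw [LinearMap.ker_comp_of_ker_eq_bot _ (ker_TV_eq_bot V₂ hz), ker_TV_eq_bot V₁ hz]
  · rw [TV_zero, TV_zero, LinearMap.ker_comp_of_ker_inf_range_eq_bot, ker_projL,
      Submodule.orthogonal_orthogonal]
    rwa [ker_projL, range_projL, Submodule.orthogonal_orthogonal]
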